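/- arXiv:2306.00265 — 5 statements merged into one kernel-verified Lean document; each statement's English description precedes it below -/
import Mathlib

section
/- The mean-squared error of the doubly robust mean estimator satisfies E[(θ* − θ̂_DR)²] ≤ 2·((1/n)·Var[Y_1] + ((m+2n)/((m+n)·n))·Var[f̂(X_1)]). -/
/-!
With the weights `c i = 1/(m+n) - 1/n·[m ≤ i]` (`drPredWeight`) and `d i = 1/n·[m ≤ i]`
(`drLabelWeight`), the estimator is the weighted sum `∑ i, (c i · f̂(X i) + d i · Y i)` of
i.i.d. terms. Since `∑ c = 0` and `∑ d = 1` it is unbiased, so its mean-squared error is its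
variance, which by independence is the sum of the variances of the terms. Bounding
`Var[a U + b V] ≤ 2a² Var[U] + 2b² Var[V]` and using `∑ d² = 1/n`, `∑ c² = m/((m+n)n)` gives
the bound.
-/

open MeasureTheory ProbabilityTheory Finset

namespace ProbabilityTheory

variable {Ω : Type*} [MeasurableSpace Ω] {μ : Measure Ω}

lemma variance_add_le [IsFiniteMeasure μ] {U V : Ω → ℝ} (hU : MemLp U 2 μ) (hV : MemLp V 2 μ) :
    Var[U + V; μ] ≤ 2 * Var[U; μ] + 2 * Var[V; μ] := by
  have hsub := variance_nonneg (U - V) μ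
  rw [variance_sub hU hV] at hsub
  rw [variance_add hU hV]
  linarith

lemma variance_mul_add_mul_le [IsFiniteMeasure μ] {U V : Ω → ℝ} (hU : MemLp U 2 μ)
    (hV : MemLp V 2 μ) (a b : ℝ) :
    Var[fun ω ↦ a * U ω + b * V ω; μ] ≤ 2 * a ^ 2 * Var[U; μ] + 2 * b ^ 2 * Var[V; μ] := by
  have h := variance_add_le (hU.const_mul a) (hV.const_mul b)
  rwa [variance_const_mul, variance_const_mul, ← mul_assoc, ← mul_assoc] at h

section WeightedSum

variable {ι E : Type*} [Fintype ι] [MeasurableSpace E] {Z : ι → Ω → E} {Z₀ : Ω → E}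
  {φ ψ : E → ℝ}

lemma IdentDistrib.mul_add_mul {Z' : Ω → E} (hZ : IdentDistrib Z' Z₀ μ μ)
    (hφ : Measurable φ) (hψ : Measurable ψ) (a b : ℝ) :
    IdentDistrib (fun ω ↦ a * φ (Z' ω) + b * ψ (Z' ω)) (fun ω ↦ a * φ (Z₀ ω) + b * ψ (Z₀ ω))
      μ μ :=
  hZ.comp (u := fun z ↦ a * φ z + b * ψ z) (by fun_prop)

lemma IdentDistrib.memLp_mul_add_mul {Z' : Ω → E} (hZ : IdentDistrib Z' Z₀ μ μ)
    (hφ : Measurable φ) (hψ : Measurable ψ) (hφ₀ : MemLp (fun ω ↦ φ (Z₀ ω)) 2 μ)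
    (hψ₀ : MemLp (fun ω ↦ ψ (Z₀ ω)) 2 μ) (a b : ℝ) :
    MemLp (fun ω ↦ a * φ (Z' ω) + b * ψ (Z' ω)) 2 μ :=
  (hZ.mul_add_mul hφ hψ a b).symm.memLp_snd ((hφ₀.const_mul a).add (hψ₀.const_mul b))

lemma integral_sum_mul_add_mul_of_identDistrib [IsFiniteMeasure μ]
    (hZ : ∀ i, IdentDistrib (Z i) Z₀ μ μ) (hφ : Measurable φ) (hψ : Measurable ψ)
    (hφ₀ : MemLp (fun ω ↦ φ (Z₀ ω)) 2 μ) (hψ₀ : MemLp (fun ω ↦ ψ (Z₀ ω)) 2 μ) (c d : ι → ℝ) :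
    μ[fun ω ↦ ∑ i, (c i * φ (Z i ω) + d i * ψ (Z i ω))]
      = (∑ i, c i) * μ[fun ω ↦ φ (Z₀ ω)] + (∑ i, d i) * μ[fun ω ↦ ψ (Z₀ ω)] := by
  have hφi := hφ₀.integrable one_le_two
  have hψi := hψ₀.integrable one_le_two
  rw [integral_finsetSum _ fun i _ ↦
    ((hZ i).memLp_mul_add_mul hφ hψ hφ₀ hψ₀ _ _).integrable one_le_two]
  simp_rw [((hZ _).mul_add_mul hφ hψ _ _).integral_eq,
    integral_add (hφi.const_mul _) (hψi.const_mul _), integral_const_mul, sum_add_distrib, sum_mul]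

lemma variance_sum_mul_add_mul_le_of_iIndepFun [IsProbabilityMeasure μ] (hind : iIndepFun Z μ)
    (hZ : ∀ i, IdentDistrib (Z i) Z₀ μ μ) (hφ : Measurable φ) (hψ : Measurable ψ)
    (hφ₀ : MemLp (fun ω ↦ φ (Z₀ ω)) 2 μ) (hψ₀ : MemLp (fun ω ↦ ψ (Z₀ ω)) 2 μ) (c d : ι → ℝ) :
    Var[fun ω ↦ ∑ i, (c i * φ (Z i ω) + d i * ψ (Z i ω)); μ]
      ≤ 2 * (∑ i, c i ^ 2) * Var[fun ω ↦ φ (Z₀ ω); μ]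
        + 2 * (∑ i, d i ^ 2) * Var[fun ω ↦ ψ (Z₀ ω); μ] := by
  set T : ι → Ω → ℝ := fun i ω ↦ c i * φ (Z i ω) + d i * ψ (Z i ω)
  have hg (i : ι) : Measurable fun z ↦ c i * φ z + d i * ψ z := by fun_prop
  have hpair : Set.Pairwise ↑(univ : Finset ι) fun i j ↦ IndepFun (T i) (T j) μ :=
    fun i _ j _ hij ↦ (hind.indepFun hij).comp (hg i) (hg j)
  have hsum : (fun ω ↦ ∑ i, T i ω) = ∑ i, T i := by ext; simp
  calc Var[fun ω ↦ ∑ i, T i ω; μ] = ∑ i, Var[T i; μ] := by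
        rw [hsum, IndepFun.variance_sum (fun i _ ↦ (hZ i).memLp_mul_add_mul hφ hψ hφ₀ hψ₀ _ _)
          hpair]
    _ ≤ ∑ i, (2 * c i ^ 2 * Var[fun ω ↦ φ (Z₀ ω); μ]
          + 2 * d i ^ 2 * Var[fun ω ↦ ψ (Z₀ ω); μ]) :=
        sum_le_sum fun i _ ↦
          ((hZ i).mul_add_mul hφ hψ _ _).variance_eq.trans_le (variance_mul_add_mul_le hφ₀ hψ₀ _ _)
    _ = _ := by simp_rw [sum_add_distrib, ← sum_mul, mul_sum]

end WeightedSum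

end ProbabilityTheory

section DoublyRobustWeights

variable (m n : ℕ)

noncomputable def drLabelWeight (i : Fin (m + n)) : ℝ := if m ≤ (i : ℕ) then 1 / n else 0

noncomputable def drPredWeight (i : Fin (m + n)) : ℝ :=
  if m ≤ (i : ℕ) then 1 / (m + n) - 1 / n else 1 / (m + n)

lemma Fin.sum_univ_add_ite_le {M : Type*} [AddCommMonoid M] (x y : M) :
    ∑ i : Fin (m + n), (if m ≤ (i : ℕ) then x else y) = m • y + n • x := by
  simp [Fin.sum_univ_add, not_le.2 (Fin.is_lt _)]

lemma sum_drLabelWeight (hn : n ≠ 0) : ∑ i, drLabelWeight m n i = 1 := by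
  simp [drLabelWeight, Fin.sum_univ_add_ite_le, hn]

lemma sum_drPredWeight (hn : n ≠ 0) : ∑ i, drPredWeight m n i = 0 := by
  simp only [drPredWeight, Fin.sum_univ_add_ite_le, nsmul_eq_mul]
  field_simp
  ring

lemma sum_drLabelWeight_sq : ∑ i, drLabelWeight m n i ^ 2 = 1 / n := by
  simp only [drLabelWeight, apply_ite (· ^ 2), Fin.sum_univ_add_ite_le, nsmul_eq_mul]
  rcases eq_or_ne n 0 with rfl | hn
  · simp
  · field_simp
    ring

lemma sum_drPredWeight_sq (hn : n ≠ 0) :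
    ∑ i, drPredWeight m n i ^ 2 = m / ((m + n) * n) := by
  simp only [drPredWeight, apply_ite (· ^ 2), Fin.sum_univ_add_ite_le, nsmul_eq_mul]
  field_simp
  ring

lemma drEstimator_eq_sum (u v : Fin (m + n) → ℝ) :
    (1 / (m + n : ℝ)) * ∑ i, u i
        - (1 / (n : ℝ)) * ∑ i ∈ univ.filter (fun i : Fin (m + n) ↦ m ≤ (i : ℕ)), (u i - v i)
      = ∑ i, (drPredWeight m n i * u i + drLabelWeight m n i * v i) := by
  rw [sum_filter, mul_sum, mul_sum, ← sum_sub_distrib]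
  refine sum_congr rfl fun i _ ↦ ?_
  simp only [drPredWeight, drLabelWeight]
  split_ifs <;> ring

end DoublyRobustWeights

/-- The mean-squared error of the doubly robust mean estimator satisfies
`E[(θ* − θ̂_DR)²] ≤ 2·((1/n)·Var[Y_1] + ((m+2n)/((m+n)·n))·Var[f̂(X_1)])`. -/
theorem doubly_robust_mean_estimator_mse_upper_var
    {Ω : Type*} [MeasurableSpace Ω] (μ : Measure Ω) [IsProbabilityMeasure μ]
    {𝒳 : Type*} [MeasurableSpace 𝒳]
    (m n : ℕ) (hn : 0 < n)
    (X : Fin (m + n) → Ω → 𝒳) (Y : Fin (m + n) → Ω → ℝ)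
    (h_indep : iIndepFun
      (fun i ω => (X i ω, Y i ω)) μ)
    (h_ident : ∀ i : Fin (m + n),
      IdentDistrib (fun ω => (X i ω, Y i ω))
        (fun ω => (X ⟨0, by omega⟩ ω, Y ⟨0, by omega⟩ ω)) μ μ)
    (f : 𝒳 → ℝ) (hf : Measurable f)
    (hY2 : MemLp (Y ⟨0, by omega⟩) 2 μ)
    (hfX2 : MemLp (fun ω => f (X ⟨0, by omega⟩ ω)) 2 μ) :
    ∫ ω, ((∫ ω', Y ⟨0, by omega⟩ ω' ∂μ)
        - ((1 / (m + n : ℝ)) * (∑ i : Fin (m + n), f (X i ω))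
          - (1 / (n : ℝ)) * ∑ i ∈ Finset.univ.filter (fun i : Fin (m + n) => m ≤ (i : ℕ)),
              (f (X i ω) - Y i ω))) ^ 2 ∂μ
      ≤ 2 * ((1 / (n : ℝ)) *
            (∫ ω, (Y ⟨0, by omega⟩ ω - ∫ ω', Y ⟨0, by omega⟩ ω' ∂μ) ^ 2 ∂μ)
          + ((m + 2 * n : ℝ) / ((m + n : ℝ) * n)) *
            ∫ ω, (f (X ⟨0, by omega⟩ ω) - ∫ ω', f (X ⟨0, by omega⟩ ω') ∂μ) ^ 2 ∂μ) := by
  have hn₀ : n ≠ 0 := hn.ne'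
  set i₀ : Fin (m + n) := ⟨0, by omega⟩
  set S : Ω → ℝ := fun ω ↦
    ∑ i, (drPredWeight m n i * f (X i ω) + drLabelWeight m n i * Y i ω)
  have hφ : Measurable fun p : 𝒳 × ℝ ↦ f p.1 := hf.comp measurable_fst
  have hmean : μ[S] = μ[Y i₀] := by
    rw [integral_sum_mul_add_mul_of_identDistrib h_ident hφ measurable_snd hfX2 hY2,
      sum_drPredWeight m n hn₀, sum_drLabelWeight m n hn₀, zero_mul, zero_add, one_mul]
  have hvar := variance_sum_mul_add_mul_le_of_iIndepFun h_indep h_ident hφ measurable_snd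
    hfX2 hY2 (drPredWeight m n) (drLabelWeight m n)
  rw [sum_drPredWeight_sq m n hn₀, sum_drLabelWeight_sq] at hvar
  have hweight : (m : ℝ) / ((m + n) * n) ≤ (m + 2 * n) / ((m + n) * n) := by
    gcongr
    linarith
  have hS : AEMeasurable S μ := (memLp_finsetSum _ fun i _ ↦
    (h_ident i).memLp_mul_add_mul hφ measurable_snd hfX2 hY2 _ _).aemeasurable
  calc _ = Var[S; μ] := by
        rw [variance_eq_integral hS, hmean]
        refine integral_congr_ae (ae_of_all _ fun ω ↦ ?_)
        simp only [S, ← drEstimator_eq_sum]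
        ring
    _ ≤ 2 * (m / ((m + n) * n)) * Var[fun ω ↦ f (X i₀ ω); μ] + 2 * (1 / n) * Var[Y i₀; μ] :=
        hvar
    _ ≤ 2 * (1 / n * Var[Y i₀; μ]
          + (m + 2 * n) / ((m + n) * n) * Var[fun ω ↦ f (X i₀ ω); μ]) := by
        linarith [mul_le_mul_of_nonneg_right hweight (variance_nonneg (fun ω ↦ f (X i₀ ω)) μ)]
    _ = _ := by rw [variance_eq_integral hY2.aemeasurable, variance_eq_integral hfX2.aemeasurable]
end

section
/- The mean-squared error of the doubly robust mean estimator satisfies the doubly robust bound E[(θ* − θ̂_DR)²] ≤ 2·min( (1/n)·Var[Y_1] + ((m+2n)/((m+n)·n))·Var[f̂(X_1)] , ((m+2n)/((m+n)·n))·Var[f̂(X_1) − Y_1] + (1/(m+n))·Var[Y_1] ). -/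
open MeasureTheory ProbabilityTheory Finset

lemma aux_sum_ite_mul {N : ℕ} (p : Fin N → Prop) [DecidablePred p] (a b : ℝ)
    (g : Fin N → ℝ) :
    ∑ i, (if p i then a else b) * g i
      = a * ∑ i ∈ Finset.univ.filter p, g i
        + b * ∑ i ∈ Finset.univ.filter (fun i => ¬ p i), g i := by
  rw [← Finset.sum_filter_add_sum_filter_not Finset.univ p (fun i => (if p i then a else b) * g i)]
  congr 1
  · rw [Finset.mul_sum]
    exact Finset.sum_congr rfl fun i hi => by rw [if_pos (Finset.mem_filter.mp hi).2]
  · rw [Finset.mul_sum]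
    exact Finset.sum_congr rfl fun i hi => by rw [if_neg (Finset.mem_filter.mp hi).2]

lemma aux_sum_ite_sq {N : ℕ} (p : Fin N → Prop) [DecidablePred p] (a b : ℝ) :
    ∑ i, (if p i then a else b) ^ 2
      = a ^ 2 * (Finset.univ.filter p).card
        + b ^ 2 * (Finset.univ.filter (fun i => ¬ p i)).card := by
  have h : ∀ i : Fin N, (if p i then a else b) ^ 2 = (if p i then a ^ 2 else b ^ 2) * 1 := by
    intro i; by_cases hp : p i <;> simp [hp]
  rw [Finset.sum_congr rfl fun i _ => h i, aux_sum_ite_mul]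
  simp [mul_comm]

lemma aux_card_tail (m n : ℕ) :
    (Finset.univ.filter (fun i : Fin (m + n) => m ≤ (i : ℕ))).card = n := by
  rw [Finset.card_filter]
  rw [Fin.sum_univ_eq_sum_range (fun k => if m ≤ k then 1 else 0)]
  rw [← Finset.card_filter]
  have : Finset.filter (fun i => m ≤ i) (Finset.range (m + n)) = Finset.Ico m (m + n) := by
    rw [Finset.range_eq_Ico, Finset.Ico_filter_le]
    congr 1
  rw [this, Nat.card_Ico]
  omega

lemma aux_card_head (m n : ℕ) :
    (Finset.univ.filter (fun i : Fin (m + n) => ¬ m ≤ (i : ℕ))).card = m := by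
  have h := Finset.card_filter_add_card_filter_not (s := (Finset.univ : Finset (Fin (m+n))))
    (p := fun i : Fin (m + n) => m ≤ (i : ℕ))
  rw [aux_card_tail] at h
  rw [Finset.card_univ, Fintype.card_fin] at h
  omega

lemma aux_weighted {Ω : Type*} [MeasurableSpace Ω] (μ : Measure Ω) [IsProbabilityMeasure μ]
    {N : ℕ} (hN : 0 < N) (V : Fin N → Ω → ℝ) (c : Fin N → ℝ)
    (hindep : iIndepFun V μ)
    (hident : ∀ i, IdentDistrib (V i) (V ⟨0, hN⟩) μ μ)
    (h2 : MemLp (V ⟨0, hN⟩) 2 μ) :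
    MemLp (fun ω => ∑ i, c i * (V i ω - ∫ ω', V ⟨0, hN⟩ ω' ∂μ)) 2 μ ∧
    ∫ ω, (∑ i, c i * (V i ω - ∫ ω', V ⟨0, hN⟩ ω' ∂μ)) ^ 2 ∂μ
      = (∑ i, (c i) ^ 2) * ∫ ω, (V ⟨0, hN⟩ ω - ∫ ω', V ⟨0, hN⟩ ω' ∂μ) ^ 2 ∂μ := by
  set μ0 : ℝ := ∫ ω', V ⟨0, hN⟩ ω' ∂μ with hμ0
  set U : Fin N → Ω → ℝ := fun i ω => c i * (V i ω - μ0) with hU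
  have hVi2 : ∀ i, MemLp (V i) 2 μ := fun i => (hident i).memLp_iff.mpr h2
  have hUi2 : ∀ i, MemLp (U i) 2 μ := fun i => ((hVi2 i).sub (memLp_const μ0)).const_mul _
  have hUint0 : ∀ i, ∫ ω, U i ω ∂μ = 0 := by
    intro i
    have hVint : ∫ ω, V i ω ∂μ = μ0 := (hident i).integral_eq
    simp only [hU]
    rw [integral_const_mul, integral_sub ((hVi2 i).integrable one_le_two) (integrable_const _),
      integral_const, probReal_univ, one_smul, hVint, sub_self, mul_zero]
  have hUindep : iIndepFun U μ :=
    hindep.comp (fun i x => c i * (x - μ0))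
      (fun i => (measurable_id.sub measurable_const).const_mul _)
  have hS2 : MemLp (fun ω => ∑ i, U i ω) 2 μ := memLp_finset_sum _ (fun i _ => hUi2 i)
  refine ⟨hS2, ?_⟩
  have hSint0 : ∫ ω, (∑ i, U i ω) ∂μ = 0 := by
    rw [integral_finset_sum _ (fun i _ => (hUi2 i).integrable one_le_two)]
    simp [hUint0]
  have hsum_eq : (∑ i, U i : Ω → ℝ) = fun ω => ∑ i, U i ω := by
    ext ω; simp
  have hvar : variance (∑ i, U i) μ = ∑ i, variance (U i) μ :=
    IndepFun.variance_sum (fun i _ => hUi2 i)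
      (fun i _ j _ hij => hUindep.indepFun hij)
  have hvarS : variance (∑ i, U i) μ = ∫ ω, (∑ i, U i ω) ^ 2 ∂μ := by
    rw [variance_eq_sub (by rw [hsum_eq]; exact hS2)]
    rw [hsum_eq] at *
    simp only [Pi.pow_apply]
    rw [hSint0]
    norm_num
  have hvarU : ∀ i, variance (U i) μ = (c i) ^ 2 * ∫ ω, (V ⟨0, hN⟩ ω - μ0) ^ 2 ∂μ := by
    intro i
    rw [variance_eq_sub (hUi2 i)]
    have h1 : ∫ ω, U i ω ∂μ = 0 := hUint0 i
    have h2' : (∫ ω, (V i ω - μ0) ^ 2 ∂μ) = ∫ ω, (V ⟨0, hN⟩ ω - μ0) ^ 2 ∂μ := by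
      exact ((hident i).comp (show Measurable fun x : ℝ => (x - μ0) ^ 2 from
        (measurable_id.sub measurable_const).pow_const 2)).integral_eq
    simp only [Pi.pow_apply]
    rw [show (∫ ω, U i ω ^ 2 ∂μ) = (c i)^2 * ∫ ω, (V i ω - μ0) ^ 2 ∂μ by
      rw [← integral_const_mul]; congr 1; ext ω; simp [hU]; ring]
    rw [h1, h2']
    norm_num
  calc ∫ ω, (∑ i, c i * (V i ω - μ0)) ^ 2 ∂μ
      = variance (∑ i, U i) μ := hvarS.symm
    _ = ∑ i, variance (U i) μ := hvar
    _ = (∑ i, (c i) ^ 2) * ∫ ω, (V ⟨0, hN⟩ ω - μ0) ^ 2 ∂μ := by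
        rw [Finset.sum_mul]; exact Finset.sum_congr rfl fun i _ => hvarU i

set_option maxHeartbeats 1000000 in
/-- The mean-squared error of the doubly robust mean estimator satisfies the doubly robust
bound `E[(θ* − θ̂_DR)²] ≤ 2·min((1/n)·Var[Y_1] + ((m+2n)/((m+n)·n))·Var[f̂(X_1)],
((m+2n)/((m+n)·n))·Var[f̂(X_1) − Y_1] + (1/(m+n))·Var[Y_1])`. -/
theorem doubly_robust_mean_estimator_mse_doubly_robust_bound
    {Ω : Type*} [MeasurableSpace Ω] (μ : Measure Ω) [IsProbabilityMeasure μ]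
    {𝒳 : Type*} [MeasurableSpace 𝒳]
    (m n : ℕ) (hm : 0 < m) (hn : 0 < n)
    (X : Fin (m + n) → Ω → 𝒳) (Y : Fin (m + n) → Ω → ℝ)
    (hXmeas : ∀ i, Measurable (X i)) (hYmeas : ∀ i, Measurable (Y i))
    (h_indep : iIndepFun
      (fun i ω => (X i ω, Y i ω)) μ)
    (h_ident : ∀ i : Fin (m + n),
      IdentDistrib (fun ω => (X i ω, Y i ω))
        (fun ω => (X ⟨0, by omega⟩ ω, Y ⟨0, by omega⟩ ω)) μ μ)
    (f : 𝒳 → ℝ) (hf : Measurable f)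
    (hY2 : MemLp (Y ⟨0, by omega⟩) 2 μ)
    (hfX2 : MemLp (fun ω => f (X ⟨0, by omega⟩ ω)) 2 μ) :
    ∫ ω, ((∫ ω', Y ⟨0, by omega⟩ ω' ∂μ)
        - ((1 / (m + n : ℝ)) * (∑ i : Fin (m + n), f (X i ω))
          - (1 / (n : ℝ)) * ∑ i ∈ Finset.univ.filter (fun i : Fin (m + n) => m ≤ (i : ℕ)),
              (f (X i ω) - Y i ω))) ^ 2 ∂μ
      ≤ 2 * min
          ((1 / (n : ℝ)) *
              (∫ ω, (Y ⟨0, by omega⟩ ω - ∫ ω', Y ⟨0, by omega⟩ ω' ∂μ) ^ 2 ∂μ)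
            + ((m + 2 * n : ℝ) / ((m + n : ℝ) * n)) *
              ∫ ω, (f (X ⟨0, by omega⟩ ω) - ∫ ω', f (X ⟨0, by omega⟩ ω') ∂μ) ^ 2 ∂μ)
          (((m + 2 * n : ℝ) / ((m + n : ℝ) * n)) *
              (∫ ω, ((f (X ⟨0, by omega⟩ ω) - Y ⟨0, by omega⟩ ω)
                - ∫ ω', (f (X ⟨0, by omega⟩ ω') - Y ⟨0, by omega⟩ ω') ∂μ) ^ 2 ∂μ)
            + (1 / (m + n : ℝ)) *
              ∫ ω, (Y ⟨0, by omega⟩ ω - ∫ ω', Y ⟨0, by omega⟩ ω' ∂μ) ^ 2 ∂μ) := by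
  have hN : 0 < m + n := by omega
  have hmR : (0:ℝ) < m := by exact_mod_cast hm
  have hnR : (0:ℝ) < n := by exact_mod_cast hn
  have hmnR : (0:ℝ) < (m:ℝ) + n := by linarith
  set i0 : Fin (m + n) := ⟨0, hN⟩ with hi0def
  -- abbreviations (as plain real numbers / functions)
  set EY : ℝ := ∫ ω', Y i0 ω' ∂μ with hEY
  set EG : ℝ := ∫ ω', f (X i0 ω') ∂μ with hEG
  set ED : ℝ := ∫ ω', (f (X i0 ω') - Y i0 ω') ∂μ with hED
  set KY : ℝ := ∫ ω, (Y i0 ω - EY) ^ 2 ∂μ with hKY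
  set KG : ℝ := ∫ ω, (f (X i0 ω) - EG) ^ 2 ∂μ with hKG
  set KD : ℝ := ∫ ω, ((f (X i0 ω) - Y i0 ω) - ED) ^ 2 ∂μ with hKD
  have hKYnn : 0 ≤ KY := integral_nonneg fun ω => sq_nonneg _
  have hKGnn : 0 ≤ KG := integral_nonneg fun ω => sq_nonneg _
  have hKDnn : 0 ≤ KD := integral_nonneg fun ω => sq_nonneg _
  -- coefficient vectors
  set a : ℝ := (m : ℝ) / (((m:ℝ) + n) * n) with ha
  set b : ℝ := -(1 / ((m:ℝ) + n)) with hb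
  set c : Fin (m + n) → ℝ := fun i => if m ≤ (i : ℕ) then a else b with hc
  set d1 : Fin (m + n) → ℝ := fun i => if m ≤ (i : ℕ) then -(1 / (n:ℝ)) else 0 with hd1
  set d2 : Fin (m + n) → ℝ := fun i => if m ≤ (i : ℕ) then b else b with hd2
  -- the three families
  have hGindep : iIndepFun
      (fun i ω => f (X i ω)) μ :=
    h_indep.comp (fun _ p => f p.1) (fun _ => hf.comp measurable_fst)
  have hWindep : iIndepFun Y μ :=
    h_indep.comp (fun _ p => p.2) (fun _ => measurable_snd)
  have hDindep : iIndepFun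
      (fun i ω => f (X i ω) - Y i ω) μ :=
    h_indep.comp (fun _ p => f p.1 - p.2)
      (fun _ => (hf.comp measurable_fst).sub measurable_snd)
  have hGident : ∀ i, IdentDistrib (fun ω => f (X i ω)) (fun ω => f (X i0 ω)) μ μ :=
    fun i => (h_ident i).comp (hf.comp measurable_fst)
  have hWident : ∀ i, IdentDistrib (Y i) (Y i0) μ μ :=
    fun i => (h_ident i).comp measurable_snd
  have hDident : ∀ i, IdentDistrib (fun ω => f (X i ω) - Y i ω)
      (fun ω => f (X i0 ω) - Y i0 ω) μ μ :=
    fun i => (h_ident i).comp ((hf.comp measurable_fst).sub measurable_snd)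
  have hD2 : MemLp (fun ω => f (X i0 ω) - Y i0 ω) 2 μ := hfX2.sub hY2
  -- apply the weighted-sum lemma
  obtain ⟨hA1mem, hA1eq⟩ := aux_weighted μ hN (fun i ω => f (X i ω)) c hGindep hGident hfX2
  obtain ⟨hB1mem, hB1eq⟩ := aux_weighted μ hN Y d1 hWindep hWident hY2
  obtain ⟨hA2mem, hA2eq⟩ := aux_weighted μ hN (fun i ω => f (X i ω) - Y i ω) c
    hDindep hDident hD2
  obtain ⟨hB2mem, hB2eq⟩ := aux_weighted μ hN Y d2 hWindep hWident hY2
  rw [← hi0def, ← hEG] at hA1mem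
  rw [← hi0def, ← hEG, ← hKG] at hA1eq
  rw [← hi0def, ← hEY] at hB1mem
  rw [← hi0def, ← hEY, ← hKY] at hB1eq
  rw [← hi0def, ← hED] at hA2mem
  rw [← hi0def, ← hED, ← hKD] at hA2eq
  rw [← hi0def, ← hEY] at hB2mem
  rw [← hi0def, ← hEY, ← hKY] at hB2eq
  -- cardinalities and coefficient sums
  have hTn := aux_card_tail m n
  have hTm := aux_card_head m n
  have hSc2 : (∑ i, (c i) ^ 2) = (m:ℝ) / (((m:ℝ) + n) * n) := by
    simp only [hc]
    rw [aux_sum_ite_sq, hTn, hTm, ha, hb]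
    field_simp
  have hSd12 : (∑ i, (d1 i) ^ 2) = 1 / (n:ℝ) := by
    simp only [hd1]
    rw [aux_sum_ite_sq, hTn, hTm]
    field_simp
    ring
  have hSd22 : (∑ i, (d2 i) ^ 2) = 1 / ((m:ℝ) + n) := by
    simp only [hd2]
    rw [aux_sum_ite_sq, hTn, hTm, hb]
    field_simp
    ring
  have hEDval : ED = EG - EY := by
    rw [hED, hEG, hEY]
    exact integral_sub (hfX2.integrable one_le_two) (hY2.integrable one_le_two)
  -- pointwise decompositions
  have claim1 : ∀ ω, EY - (1 / ((m:ℝ) + n) * (∑ i : Fin (m + n), f (X i ω))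
        - 1 / (n:ℝ) * ∑ i ∈ Finset.univ.filter (fun i : Fin (m + n) => m ≤ (i : ℕ)),
            (f (X i ω) - Y i ω))
      = (∑ i, c i * (f (X i ω) - EG)) + (∑ i, d1 i * (Y i ω - EY)) := by
    intro ω
    have e3 : (∑ i : Fin (m + n), f (X i ω))
        = (∑ i ∈ Finset.univ.filter (fun i : Fin (m + n) => m ≤ (i : ℕ)), f (X i ω))
          + ∑ i ∈ Finset.univ.filter (fun i : Fin (m + n) => ¬ m ≤ (i : ℕ)), f (X i ω) :=
      (Finset.sum_filter_add_sum_filter_not Finset.univ _ _).symm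
    simp only [hc, hd1]
    rw [aux_sum_ite_mul, aux_sum_ite_mul, e3]
    simp only [Finset.sum_sub_distrib, Finset.sum_const, nsmul_eq_mul, hTn, hTm, ha, hb]
    field_simp
    ring
  have claim2 : ∀ ω, EY - (1 / ((m:ℝ) + n) * (∑ i : Fin (m + n), f (X i ω))
        - 1 / (n:ℝ) * ∑ i ∈ Finset.univ.filter (fun i : Fin (m + n) => m ≤ (i : ℕ)),
            (f (X i ω) - Y i ω))
      = (∑ i, c i * ((f (X i ω) - Y i ω) - ED)) + (∑ i, d2 i * (Y i ω - EY)) := by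
    intro ω
    have e3 : (∑ i : Fin (m + n), f (X i ω))
        = (∑ i ∈ Finset.univ.filter (fun i : Fin (m + n) => m ≤ (i : ℕ)), f (X i ω))
          + ∑ i ∈ Finset.univ.filter (fun i : Fin (m + n) => ¬ m ≤ (i : ℕ)), f (X i ω) :=
      (Finset.sum_filter_add_sum_filter_not Finset.univ _ _).symm
    have e4 : (∑ i : Fin (m + n), Y i ω)
        = (∑ i ∈ Finset.univ.filter (fun i : Fin (m + n) => m ≤ (i : ℕ)), Y i ω)
          + ∑ i ∈ Finset.univ.filter (fun i : Fin (m + n) => ¬ m ≤ (i : ℕ)), Y i ω :=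
      (Finset.sum_filter_add_sum_filter_not Finset.univ _ _).symm
    simp only [hc, hd2]
    rw [aux_sum_ite_mul, aux_sum_ite_mul, e3, hEDval]
    simp only [Finset.sum_sub_distrib, Finset.sum_const, nsmul_eq_mul, hTn, hTm, ha, hb]
    field_simp
    ring
  rw [mul_min_of_nonneg _ _ (by norm_num : (0:ℝ) ≤ 2)]
  refine le_min ?_ ?_
  · -- branch 1
    have hint1 : Integrable (fun ω => ((∑ i, c i * (f (X i ω) - EG))
        + (∑ i, d1 i * (Y i ω - EY))) ^ 2) μ := (hA1mem.add hB1mem).integrable_sq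
    have hintA : Integrable (fun ω => 2 * (∑ i, c i * (f (X i ω) - EG)) ^ 2) μ :=
      hA1mem.integrable_sq.const_mul 2
    have hintB : Integrable (fun ω => 2 * (∑ i, d1 i * (Y i ω - EY)) ^ 2) μ :=
      hB1mem.integrable_sq.const_mul 2
    calc ∫ ω, (EY - (1 / ((m:ℝ) + n) * (∑ i : Fin (m + n), f (X i ω))
            - 1 / (n:ℝ) * ∑ i ∈ Finset.univ.filter (fun i : Fin (m + n) => m ≤ (i : ℕ)),
                (f (X i ω) - Y i ω))) ^ 2 ∂μ
        = ∫ ω, ((∑ i, c i * (f (X i ω) - EG)) + (∑ i, d1 i * (Y i ω - EY))) ^ 2 ∂μ :=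
          integral_congr_ae (Filter.Eventually.of_forall fun ω => by simp only [claim1 ω])
      _ ≤ ∫ ω, (2 * (∑ i, c i * (f (X i ω) - EG)) ^ 2
            + 2 * (∑ i, d1 i * (Y i ω - EY)) ^ 2) ∂μ := by
          refine integral_mono hint1 (hintA.add hintB) fun ω => ?_
          nlinarith [sq_nonneg ((∑ i, c i * (f (X i ω) - EG)) - (∑ i, d1 i * (Y i ω - EY)))]
      _ = 2 * ((∑ i, (c i) ^ 2) * KG) + 2 * ((∑ i, (d1 i) ^ 2) * KY) := by
          rw [integral_add hintA hintB, integral_const_mul, integral_const_mul, hA1eq, hB1eq]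
      _ ≤ 2 * (1 / (n:ℝ) * KY + ((m:ℝ) + 2 * n) / (((m:ℝ) + n) * n) * KG) := by
          rw [hSc2, hSd12]
          have hle : (m:ℝ) / (((m:ℝ) + n) * n) ≤ ((m:ℝ) + 2 * n) / (((m:ℝ) + n) * n) := by
            gcongr
            linarith
          nlinarith [mul_le_mul_of_nonneg_right hle hKGnn]
  · -- branch 2
    have hint1 : Integrable (fun ω => ((∑ i, c i * ((f (X i ω) - Y i ω) - ED))
        + (∑ i, d2 i * (Y i ω - EY))) ^ 2) μ := (hA2mem.add hB2mem).integrable_sq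
    have hintA : Integrable (fun ω => 2 * (∑ i, c i * ((f (X i ω) - Y i ω) - ED)) ^ 2) μ :=
      hA2mem.integrable_sq.const_mul 2
    have hintB : Integrable (fun ω => 2 * (∑ i, d2 i * (Y i ω - EY)) ^ 2) μ :=
      hB2mem.integrable_sq.const_mul 2
    calc ∫ ω, (EY - (1 / ((m:ℝ) + n) * (∑ i : Fin (m + n), f (X i ω))
            - 1 / (n:ℝ) * ∑ i ∈ Finset.univ.filter (fun i : Fin (m + n) => m ≤ (i : ℕ)),
                (f (X i ω) - Y i ω))) ^ 2 ∂μ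
        = ∫ ω, ((∑ i, c i * ((f (X i ω) - Y i ω) - ED)) + (∑ i, d2 i * (Y i ω - EY))) ^ 2 ∂μ :=
          integral_congr_ae (Filter.Eventually.of_forall fun ω => by simp only [claim2 ω])
      _ ≤ ∫ ω, (2 * (∑ i, c i * ((f (X i ω) - Y i ω) - ED)) ^ 2
            + 2 * (∑ i, d2 i * (Y i ω - EY)) ^ 2) ∂μ := by
          refine integral_mono hint1 (hintA.add hintB) fun ω => ?_
          nlinarith [sq_nonneg ((∑ i, c i * ((f (X i ω) - Y i ω) - ED))
            - (∑ i, d2 i * (Y i ω - EY)))]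
      _ = 2 * ((∑ i, (c i) ^ 2) * KD) + 2 * ((∑ i, (d2 i) ^ 2) * KY) := by
          rw [integral_add hintA hintB, integral_const_mul, integral_const_mul, hA2eq, hB2eq]
      _ ≤ 2 * (((m:ℝ) + 2 * n) / (((m:ℝ) + n) * n) * KD + 1 / ((m:ℝ) + n) * KY) := by
          rw [hSc2, hSd22]
          have hle : (m:ℝ) / (((m:ℝ) + n) * n) ≤ ((m:ℝ) + 2 * n) / (((m:ℝ) + n) * n) := by
            gcongr
            linarith
          nlinarith [mul_le_mul_of_nonneg_right hle hKDnn]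
end

section
/- With probability at least 1 − δ, the doubly robust gradient satisfies ‖G_DR‖₂ ≤ √(3·σ_f² / ((m+n)·δ)) + √(3·σ_f² / (n·δ)) + √(3·σ_Y² / (n·δ)), where σ_f² = E[‖G(X_1, f̂(X_1)) − E[G(X_1, f̂(X_1))]‖₂²] and σ_Y² = E[‖G(X_1, Y_1) − E[G(X_1, Y_1)]‖₂²]. -/
open MeasureTheory ProbabilityTheory Finset
open scoped ENNReal

section DRHelpers

variable {Ω : Type*} [MeasurableSpace Ω] {μ : Measure Ω}

local notation "⟪" x ", " y "⟫" => @inner ℝ _ _ x y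

lemma DR.integrable_norm_sq {E : Type*} [NormedAddCommGroup E] {g : Ω → E}
    (hg : MemLp g 2 μ) : Integrable (fun ω => ‖g ω‖ ^ 2) μ := by
  have h := hg.integrable_norm_rpow two_ne_zero ENNReal.ofNat_ne_top
  have : ∀ ω, ‖g ω‖ ^ ((2 : ℝ≥0∞).toReal) = ‖g ω‖ ^ 2 := by
    intro ω
    rw [ENNReal.toReal_ofNat]
    exact Real.rpow_two _
  simpa [this] using h

lemma DR.integrable_inner {E : Type*} [NormedAddCommGroup E] [InnerProductSpace ℝ E]
    {g h : Ω → E} (hg : MemLp g 2 μ) (hh : MemLp h 2 μ) :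
    Integrable (fun ω => ⟪g ω, h ω⟫) μ := by
  have key : ∀ ω, ⟪g ω, h ω⟫ = (‖g ω + h ω‖ ^ 2 - ‖g ω‖ ^ 2 - ‖h ω‖ ^ 2) / 2 := by
    intro ω
    rw [norm_add_sq_real]
    ring
  simp only [key]
  exact (((DR.integrable_norm_sq (hg.add hh)).sub (DR.integrable_norm_sq hg)).sub
    (DR.integrable_norm_sq hh)).div_const 2

/-- For pairwise independent centered square-integrable `EuclideanSpace`-valued random
variables, the second moment of the sum is the sum of the second moments. -/
lemma DR.integral_norm_sq_sum {d : ℕ} [IsProbabilityMeasure μ] {ι : Type*}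
    (s : Finset ι) (Z : ι → Ω → EuclideanSpace ℝ (Fin d))
    (hmem : ∀ i, MemLp (Z i) 2 μ)
    (hcent : ∀ i, ∫ ω, Z i ω ∂μ = 0)
    (hind : ∀ i j, i ≠ j → IndepFun (Z i) (Z j) μ) :
    ∫ ω, ‖∑ i ∈ s, Z i ω‖ ^ 2 ∂μ = ∑ i ∈ s, ∫ ω, ‖Z i ω‖ ^ 2 ∂μ := by
  have hint : ∀ i, Integrable (Z i) μ := fun i => (hmem i).integrable one_le_two
  have hcoordmem : ∀ i (l : Fin d), MemLp (fun ω => Z i ω l) 2 μ := by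
    intro i l
    have h := ContinuousLinearMap.comp_memLp' (EuclideanSpace.proj l (𝕜 := ℝ)) (hmem i)
    exact h
  have hcross : ∀ i j, i ≠ j → ∫ ω, ⟪Z i ω, Z j ω⟫ ∂μ = 0 := by
    intro i j hij
    have hpair : IndepFun (Z i) (Z j) μ := hind i j hij
    have hexp : (fun ω => ⟪Z i ω, Z j ω⟫) = fun ω => ∑ l : Fin d, Z i ω l * Z j ω l := by
      funext ω
      simp [PiLp.inner_apply, RCLike.inner_apply, conj_trivial]
      exact Finset.sum_congr rfl fun _ _ => mul_comm _ _
    have hprod : ∀ l : Fin d, Integrable (fun ω => Z i ω l * Z j ω l) μ := by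
      intro l
      have := DR.integrable_inner (hcoordmem j l) (hcoordmem i l)
      simpa [RCLike.inner_apply, conj_trivial] using this
    rw [hexp, integral_finset_sum _ (fun l _ => hprod l)]
    refine Finset.sum_eq_zero fun l _ => ?_
    have hindl : IndepFun (fun ω => Z i ω l) (fun ω => Z j ω l) μ := by
      have h := hpair.comp (φ := EuclideanSpace.proj l (𝕜 := ℝ))
        (ψ := EuclideanSpace.proj l (𝕜 := ℝ))
        (EuclideanSpace.proj l (𝕜 := ℝ)).measurable
        (EuclideanSpace.proj l (𝕜 := ℝ)).measurable
      exact h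
    have hi1 : Integrable (fun ω => Z i ω l) μ := by
      have h := (EuclideanSpace.proj l (𝕜 := ℝ)).integrable_comp (hint i)
      simpa [Function.comp] using h
    have hj1 : Integrable (fun ω => Z j ω l) μ := by
      have h := (EuclideanSpace.proj l (𝕜 := ℝ)).integrable_comp (hint j)
      simpa [Function.comp] using h
    have hmul := hindl.integral_fun_mul_eq_mul_integral hi1.aestronglyMeasurable hj1.aestronglyMeasurable
    have hEi : ∫ ω, Z i ω l ∂μ = 0 := by
      have := (EuclideanSpace.proj l).integral_comp_comm (hint i)
      rw [hcent i] at this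
      simpa using this
    have : ∫ ω, Z i ω l * Z j ω l ∂μ
        = (∫ ω, Z i ω l ∂μ) * (∫ ω, Z j ω l ∂μ) := by
      simpa [Function.comp] using hmul
    rw [this, hEi, zero_mul]
  have expand : ∀ ω, ‖∑ i ∈ s, Z i ω‖ ^ 2 = ∑ i ∈ s, ∑ j ∈ s, ⟪Z i ω, Z j ω⟫ := by
    intro ω
    rw [← real_inner_self_eq_norm_sq, sum_inner]
    exact Finset.sum_congr rfl fun i _ => inner_sum _ _ _
  have hii : ∀ i j, Integrable (fun ω => ⟪Z i ω, Z j ω⟫) μ := fun i j =>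
    DR.integrable_inner (hmem i) (hmem j)
  calc ∫ ω, ‖∑ i ∈ s, Z i ω‖ ^ 2 ∂μ
      = ∫ ω, ∑ i ∈ s, ∑ j ∈ s, ⟪Z i ω, Z j ω⟫ ∂μ := by simp only [expand]
    _ = ∑ i ∈ s, ∑ j ∈ s, ∫ ω, ⟪Z i ω, Z j ω⟫ ∂μ := by
        rw [integral_finset_sum _ (fun i _ => integrable_finset_sum _ (fun j _ => hii i j))]
        exact Finset.sum_congr rfl fun i _ => integral_finset_sum _ (fun j _ => hii i j)
    _ = ∑ i ∈ s, ∫ ω, ‖Z i ω‖ ^ 2 ∂μ := by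
        refine Finset.sum_congr rfl fun i hi => ?_
        rw [Finset.sum_eq_single_of_mem i hi (fun j _ hji => hcross i j (Ne.symm hji))]
        simp only [real_inner_self_eq_norm_sq]

/-- Markov/Chebyshev-type bound. -/
lemma DR.markov [IsProbabilityMeasure μ] {E : Type*} [NormedAddCommGroup E]
    {W : Ω → E} (hW : MemLp W 2 μ) {v c : ℝ}
    (hv : ∫ ω, ‖W ω‖ ^ 2 ∂μ ≤ v) (hc : 0 < c) :
    μ {ω | Real.sqrt (v / c) < ‖W ω‖} ≤ ENNReal.ofReal c := by
  have hint : Integrable (fun ω => ‖W ω‖ ^ 2) μ := DR.integrable_norm_sq hW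
  have hnn : 0 ≤ ∫ ω, ‖W ω‖ ^ 2 ∂μ := integral_nonneg fun ω => sq_nonneg _
  rcases le_or_gt v 0 with hv0 | hv0
  · have h0 : ∫ ω, ‖W ω‖ ^ 2 ∂μ = 0 := le_antisymm (hv.trans hv0) hnn
    have hae : (fun ω => ‖W ω‖ ^ 2) =ᵐ[μ] 0 :=
      (integral_eq_zero_iff_of_nonneg (fun ω => sq_nonneg _) hint).mp h0
    have hae' : ∀ᵐ ω ∂μ, ¬ (Real.sqrt (v / c) < ‖W ω‖) := by
      filter_upwards [hae] with ω hω
      have h1 : ‖W ω‖ = 0 := by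
        have : ‖W ω‖ ^ 2 = 0 := hω
        nlinarith [norm_nonneg (W ω)]
      rw [h1]
      exact not_lt.mpr (Real.sqrt_nonneg _)
    have h0' : μ {ω | Real.sqrt (v / c) < ‖W ω‖} = 0 := by
      have := ae_iff.mp hae'
      simpa [not_not] using this
    simp [h0']
  · set t := Real.sqrt (v / c) with ht
    have htpos : 0 < t := Real.sqrt_pos.mpr (div_pos hv0 hc)
    have ht2 : t ^ 2 = v / c := Real.sq_sqrt (div_pos hv0 hc).le
    have hsub : {ω | t < ‖W ω‖} ⊆ {ω | t ^ 2 ≤ ‖W ω‖ ^ 2} := by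
      intro ω hω
      exact pow_le_pow_left₀ htpos.le (le_of_lt hω) 2
    have hM := mul_meas_ge_le_integral_of_nonneg
      (μ := μ) (f := fun ω => ‖W ω‖ ^ 2)
      (Filter.Eventually.of_forall fun ω => sq_nonneg _) hint (t ^ 2)
    have hfin : μ {ω | t ^ 2 ≤ ‖W ω‖ ^ 2} ≠ ⊤ := measure_ne_top μ _
    have htr : (μ {ω | t ^ 2 ≤ ‖W ω‖ ^ 2}).toReal ≤ c := by
      have h2 : v / c * (μ {ω | t ^ 2 ≤ ‖W ω‖ ^ 2}).toReal ≤ v := by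
        rw [← ht2]; exact hM.trans hv
      by_contra hgt
      push_neg at hgt
      have h3 : v / c * c < v / c * (μ {ω | t ^ 2 ≤ ‖W ω‖ ^ 2}).toReal :=
        mul_lt_mul_of_pos_left hgt (div_pos hv0 hc)
      have h4 : v / c * c = v := div_mul_cancel₀ v hc.ne'
      linarith
    calc μ {ω | t < ‖W ω‖} ≤ μ {ω | t ^ 2 ≤ ‖W ω‖ ^ 2} := measure_mono hsub
      _ ≤ ENNReal.ofReal c := by
          rw [← ENNReal.ofReal_toReal hfin]
          exact ENNReal.ofReal_le_ofReal htr

set_option maxHeartbeats 1000000 in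
lemma DR.union_bound [IsProbabilityMeasure μ] {A B1 B2 B3 : Set Ω}
    (h : B1ᶜ ∩ B2ᶜ ∩ B3ᶜ ⊆ A) {δ : ℝ} (hδ : 0 ≤ δ) (hδ1 : δ ≤ 1)
    (h1 : μ B1 ≤ ENNReal.ofReal (δ / 3)) (h2 : μ B2 ≤ ENNReal.ofReal (δ / 3))
    (h3 : μ B3 ≤ ENNReal.ofReal (δ / 3)) :
    ENNReal.ofReal (1 - δ) ≤ μ A := by
  have hsub : Aᶜ ⊆ B1 ∪ B2 ∪ B3 := by
    have := Set.compl_subset_compl.mpr h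
    simpa [Set.compl_inter, compl_compl] using this
  have hAc : μ Aᶜ ≤ ENNReal.ofReal δ := by
    calc μ Aᶜ ≤ μ (B1 ∪ B2 ∪ B3) := measure_mono hsub
      _ ≤ μ B1 + μ B2 + μ B3 :=
        le_trans (measure_union_le _ _) (add_le_add_left (measure_union_le _ _) _)
      _ ≤ ENNReal.ofReal (δ / 3) + ENNReal.ofReal (δ / 3) + ENNReal.ofReal (δ / 3) := by
          exact add_le_add (add_le_add h1 h2) h3
      _ = ENNReal.ofReal δ := by
          rw [← ENNReal.ofReal_add (by linarith) (by linarith),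
            ← ENNReal.ofReal_add (by linarith) (by linarith)]
          rw [show δ / 3 + δ / 3 + δ / 3 = δ by ring]
  have hone : (1 : ℝ≥0∞) ≤ μ A + μ Aᶜ := by
    have huniv : (Set.univ : Set Ω) ⊆ A ∪ Aᶜ := by simp
    calc (1 : ℝ≥0∞) = μ Set.univ := (measure_univ (μ := μ)).symm
      _ ≤ μ (A ∪ Aᶜ) := measure_mono huniv
      _ ≤ μ A + μ Aᶜ := measure_union_le _ _
  have hkey : ENNReal.ofReal (1 - δ) + ENNReal.ofReal δ ≤ μ A + ENNReal.ofReal δ := by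
    rw [← ENNReal.ofReal_add (by linarith) hδ]
    have : ENNReal.ofReal (1 - δ + δ) = 1 := by norm_num
    rw [this]
    exact hone.trans (add_le_add_right hAc _)
  exact (ENNReal.add_le_add_iff_right ENNReal.ofReal_ne_top).mp hkey

end DRHelpers

/-- With probability at least `1 − δ`, the doubly robust gradient satisfies
`‖G_DR‖₂ ≤ √(3σ_f²/((m+n)δ)) + √(3σ_f²/(nδ)) + √(3σ_Y²/(nδ))`, where
`σ_f² = E[‖G(X₁,f̂(X₁)) − E[G(X₁,f̂(X₁))]‖²]` and `σ_Y² = E[‖G(X₁,Y₁) − E[G(X₁,Y₁)]‖²]`. -/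
theorem doubly_robust_gradient_bound_second
    {Ω : Type*} [MeasurableSpace Ω] (μ : Measure Ω) [IsProbabilityMeasure μ]
    {𝒳 𝒴 : Type*} [MeasurableSpace 𝒳] [MeasurableSpace 𝒴]
    (m n d : ℕ) (hm : 0 < m) (hn : 0 < n) (hd : 0 < d)
    (δ : ℝ) (hδ0 : 0 < δ) (hδ1 : δ < 1)
    (X : Fin (m + n) → Ω → 𝒳) (Y : Fin (m + n) → Ω → 𝒴)
    (hXmeas : ∀ i, Measurable (X i)) (hYmeas : ∀ i, Measurable (Y i))
    (h_indep : iIndepFun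
      (fun i ω => (X i ω, Y i ω)) μ)
    (h_ident : ∀ i : Fin (m + n),
      IdentDistrib (fun ω => (X i ω, Y i ω))
        (fun ω => (X ⟨0, by omega⟩ ω, Y ⟨0, by omega⟩ ω)) μ μ)
    (f : 𝒳 → 𝒴) (hf : Measurable f)
    (G : 𝒳 × 𝒴 → EuclideanSpace ℝ (Fin d)) (hG : Measurable G)
    (hGf2 : MemLp (fun ω => G (X ⟨0, by omega⟩ ω, f (X ⟨0, by omega⟩ ω))) 2 μ)
    (hGY2 : MemLp (fun ω => G (X ⟨0, by omega⟩ ω, Y ⟨0, by omega⟩ ω)) 2 μ)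
    (hopt : (∫ ω, G (X ⟨0, by omega⟩ ω, Y ⟨0, by omega⟩ ω) ∂μ) = 0) :
    ENNReal.ofReal (1 - δ) ≤
      μ {ω | ‖((m + n : ℝ))⁻¹ • (∑ i : Fin (m + n), G (X i ω, f (X i ω)))
          + ((n : ℝ))⁻¹ • ∑ i ∈ Finset.univ.filter (fun i : Fin (m + n) => m ≤ (i : ℕ)),
              (G (X i ω, Y i ω) - G (X i ω, f (X i ω)))‖
        ≤ Real.sqrt (3 * (∫ ω, ‖G (X ⟨0, by omega⟩ ω, f (X ⟨0, by omega⟩ ω))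
              - ∫ ω', G (X ⟨0, by omega⟩ ω', f (X ⟨0, by omega⟩ ω')) ∂μ‖ ^ 2 ∂μ)
            / ((m + n : ℝ) * δ))
          + Real.sqrt (3 * (∫ ω, ‖G (X ⟨0, by omega⟩ ω, f (X ⟨0, by omega⟩ ω))
                - ∫ ω', G (X ⟨0, by omega⟩ ω', f (X ⟨0, by omega⟩ ω')) ∂μ‖ ^ 2 ∂μ)
            / ((n : ℝ) * δ))
          + Real.sqrt (3 * (∫ ω, ‖G (X ⟨0, by omega⟩ ω, Y ⟨0, by omega⟩ ω)
                - ∫ ω', G (X ⟨0, by omega⟩ ω', Y ⟨0, by omega⟩ ω') ∂μ‖ ^ 2 ∂μ)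
            / ((n : ℝ) * δ))} := by
  classical
  rw [hopt]
  simp only [sub_zero]
  have h0 : (0 : ℕ) < m + n := by omega
  set i0 : Fin (m + n) := ⟨0, h0⟩ with hi0def
  -- abbreviations
  set Gf : Fin (m + n) → Ω → EuclideanSpace ℝ (Fin d) :=
    fun i ω => G (X i ω, f (X i ω)) with hGfdef
  set GY : Fin (m + n) → Ω → EuclideanSpace ℝ (Fin d) :=
    fun i ω => G (X i ω, Y i ω) with hGYdef
  have hμf : ∀ i : Fin (m+n), Measurable (fun ω => (X i ω, Y i ω)) :=
    fun i => (hXmeas i).prodMk (hYmeas i)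
  set μf : EuclideanSpace ℝ (Fin d) := ∫ ω', Gf i0 ω' ∂μ with hμfdef
  set Z : Fin (m + n) → Ω → EuclideanSpace ℝ (Fin d) :=
    fun i ω => Gf i ω - μf with hZdef
  -- measurable maps on 𝒳 × 𝒴
  have hhZ : Measurable (fun p : 𝒳 × 𝒴 => G (p.1, f p.1) - μf) :=
    (hG.comp (measurable_fst.prodMk (hf.comp measurable_fst))).sub measurable_const
  have hhY : Measurable G := hG
  -- identical distribution of the centered variables
  have hZid : ∀ i, IdentDistrib (Z i) (Z i0) μ μ := by
    intro i
    exact (h_ident i).comp hhZ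
  have hYid : ∀ i, IdentDistrib (GY i) (GY i0) μ μ := by
    intro i
    exact (h_ident i).comp hhY
  -- MemLp
  have hZ0mem : MemLp (Z i0) 2 μ := hGf2.sub (memLp_const μf)
  have hZmem : ∀ i, MemLp (Z i) 2 μ := fun i => (hZid i).symm.memLp_snd hZ0mem
  have hY0mem : MemLp (GY i0) 2 μ := hGY2
  have hYmem : ∀ i, MemLp (GY i) 2 μ := fun i => (hYid i).symm.memLp_snd hY0mem
  -- centering
  have hZ0cent : ∫ ω, Z i0 ω ∂μ = 0 := by
    rw [hZdef]
    simp only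
    rw [integral_sub (hGf2.integrable one_le_two) (integrable_const μf)]
    simp [hμfdef]
    exact sub_self _
  have hZcent : ∀ i, ∫ ω, Z i ω ∂μ = 0 := by
    intro i
    rw [(hZid i).integral_eq, hZ0cent]
  have hYcent : ∀ i, ∫ ω, GY i ω ∂μ = 0 := by
    intro i
    rw [(hYid i).integral_eq]
    exact hopt
  -- independence
  have hZind : ∀ i j, i ≠ j → IndepFun (Z i) (Z j) μ := by
    intro i j hij
    exact (h_indep.indepFun hij).comp hhZ hhZ
  have hYind : ∀ i j, i ≠ j → IndepFun (GY i) (GY j) μ := by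
    intro i j hij
    exact (h_indep.indepFun hij).comp hhY hhY
  -- variances via identical distribution
  set σf : ℝ := ∫ ω, ‖Z i0 ω‖ ^ 2 ∂μ with hσfdef
  set σY : ℝ := ∫ ω, ‖GY i0 ω‖ ^ 2 ∂μ with hσYdef
  have hσf0 : 0 ≤ σf := integral_nonneg fun ω => sq_nonneg _
  have hσY0 : 0 ≤ σY := integral_nonneg fun ω => sq_nonneg _
  have hnormsq_meas : Measurable (fun v : EuclideanSpace ℝ (Fin d) => ‖v‖ ^ 2) :=
    measurable_norm.pow_const 2
  have hZvar : ∀ i, ∫ ω, ‖Z i ω‖ ^ 2 ∂μ = σf := by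
    intro i
    exact ((hZid i).comp hnormsq_meas).integral_eq
  have hYvar : ∀ i, ∫ ω, ‖GY i ω‖ ^ 2 ∂μ = σY := by
    intro i
    exact ((hYid i).comp hnormsq_meas).integral_eq
  -- the index set of the labelled part
  set s : Finset (Fin (m + n)) := Finset.univ.filter (fun i : Fin (m + n) => m ≤ (i : ℕ))
    with hsdef
  have hcard : s.card = n := by
    have himg : s = Finset.image (fun j : Fin n => (⟨m + j, by omega⟩ : Fin (m + n)))
        Finset.univ := by
      ext i
      simp only [hsdef, Finset.mem_filter, Finset.mem_univ, true_and, Finset.mem_image]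
      constructor
      · intro hi
        refine ⟨⟨(i : ℕ) - m, by omega⟩, ?_⟩
        apply Fin.ext
        simp
        omega
      · rintro ⟨j, rfl⟩
        simp
    rw [himg, Finset.card_image_of_injective _ ?_, Finset.card_univ, Fintype.card_fin]
    intro a b hab
    have := congrArg Fin.val hab
    simp only at this
    exact Fin.ext (by omega)
  -- the three averaged processes
  set T1 : Ω → EuclideanSpace ℝ (Fin d) :=
    fun ω => ((m + n : ℝ))⁻¹ • ∑ i : Fin (m + n), Z i ω with hT1def
  set T2 : Ω → EuclideanSpace ℝ (Fin d) :=
    fun ω => ((n : ℝ))⁻¹ • ∑ i ∈ s, GY i ω with hT2def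
  set T3 : Ω → EuclideanSpace ℝ (Fin d) :=
    fun ω => ((n : ℝ))⁻¹ • ∑ i ∈ s, Z i ω with hT3def
  have hk0 : (0 : ℝ) < (m : ℝ) + n := by positivity
  have hn0 : (0 : ℝ) < (n : ℝ) := by exact_mod_cast hn
  -- second moments of the averages
  have hsum1 : ∫ ω, ‖∑ i : Fin (m + n), Z i ω‖ ^ 2 ∂μ = ((m + n : ℕ) : ℝ) * σf := by
    rw [DR.integral_norm_sq_sum Finset.univ Z hZmem hZcent hZind]
    simp [hZvar, Finset.card_univ, mul_comm]
  have hsum3 : ∫ ω, ‖∑ i ∈ s, Z i ω‖ ^ 2 ∂μ = (n : ℝ) * σf := by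
    rw [DR.integral_norm_sq_sum s Z hZmem hZcent hZind]
    simp [hZvar, hcard, mul_comm]
  have hsum2 : ∫ ω, ‖∑ i ∈ s, GY i ω‖ ^ 2 ∂μ = (n : ℝ) * σY := by
    rw [DR.integral_norm_sq_sum s GY hYmem hYcent hYind]
    simp [hYvar, hcard, mul_comm]
  have hsmul_sq : ∀ (c : ℝ) (W : Ω → EuclideanSpace ℝ (Fin d)), 0 ≤ c →
      ∀ ω, ‖c • W ω‖ ^ 2 = c ^ 2 * ‖W ω‖ ^ 2 := by
    intro c W hc ω
    rw [norm_smul, Real.norm_eq_abs, abs_of_nonneg hc, mul_pow]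
  have hT1v : ∫ ω, ‖T1 ω‖ ^ 2 ∂μ ≤ σf / ((m : ℝ) + n) := by
    have hpos1 : (0 : ℝ) ≤ ((m + n : ℝ))⁻¹ := by positivity
    have : ∀ ω, ‖T1 ω‖ ^ 2 = (((m + n : ℝ))⁻¹) ^ 2 * ‖∑ i : Fin (m + n), Z i ω‖ ^ 2 :=
      fun ω => hsmul_sq ((m + n : ℝ))⁻¹ (fun ω => ∑ i : Fin (m + n), Z i ω) hpos1 ω
    rw [integral_congr_ae (Filter.Eventually.of_forall this), integral_const_mul, hsum1]
    have hc : ((m + n : ℕ) : ℝ) = (m : ℝ) + n := by push_cast; ring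
    rw [hc]
    rw [div_eq_mul_inv]
    have : ((m + n : ℝ))⁻¹ ^ 2 * (((m : ℝ) + n) * σf) = σf * ((m : ℝ) + n)⁻¹ := by
      field_simp
    rw [this]
  have hT3v : ∫ ω, ‖T3 ω‖ ^ 2 ∂μ ≤ σf / (n : ℝ) := by
    have hpos2 : (0 : ℝ) ≤ ((n : ℝ))⁻¹ := by positivity
    have : ∀ ω, ‖T3 ω‖ ^ 2 = (((n : ℝ))⁻¹) ^ 2 * ‖∑ i ∈ s, Z i ω‖ ^ 2 :=
      fun ω => hsmul_sq ((n : ℝ))⁻¹ (fun ω => ∑ i ∈ s, Z i ω) hpos2 ω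
    rw [integral_congr_ae (Filter.Eventually.of_forall this), integral_const_mul, hsum3]
    rw [div_eq_mul_inv]
    have : ((n : ℝ))⁻¹ ^ 2 * ((n : ℝ) * σf) = σf * (n : ℝ)⁻¹ := by
      field_simp
    rw [this]
  have hT2v : ∫ ω, ‖T2 ω‖ ^ 2 ∂μ ≤ σY / (n : ℝ) := by
    have hpos3 : (0 : ℝ) ≤ ((n : ℝ))⁻¹ := by positivity
    have : ∀ ω, ‖T2 ω‖ ^ 2 = (((n : ℝ))⁻¹) ^ 2 * ‖∑ i ∈ s, GY i ω‖ ^ 2 :=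
      fun ω => hsmul_sq ((n : ℝ))⁻¹ (fun ω => ∑ i ∈ s, GY i ω) hpos3 ω
    rw [integral_congr_ae (Filter.Eventually.of_forall this), integral_const_mul, hsum2]
    rw [div_eq_mul_inv]
    have : ((n : ℝ))⁻¹ ^ 2 * ((n : ℝ) * σY) = σY * (n : ℝ)⁻¹ := by
      field_simp
    rw [this]
  -- MemLp of the averages
  have hT1mem : MemLp T1 2 μ := by
    have h := (memLp_finset_sum' Finset.univ
      (fun (i : Fin (m + n)) _ => hZmem i)).const_smul ((m + n : ℝ))⁻¹
    refine h.ae_eq (Filter.Eventually.of_forall fun ω => ?_)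
    simp [hT1def, Finset.sum_apply]
  have hT2mem : MemLp T2 2 μ := by
    have h := (memLp_finset_sum' s (fun i _ => hYmem i)).const_smul ((n : ℝ))⁻¹
    refine h.ae_eq (Filter.Eventually.of_forall fun ω => ?_)
    simp [hT2def, Finset.sum_apply]
  have hT3mem : MemLp T3 2 μ := by
    have h := (memLp_finset_sum' s (fun i _ => hZmem i)).const_smul ((n : ℝ))⁻¹
    refine h.ae_eq (Filter.Eventually.of_forall fun ω => ?_)
    simp [hT3def, Finset.sum_apply]
  -- error thresholds
  set t1 : ℝ := Real.sqrt (3 * σf / (((m : ℝ) + n) * δ)) with ht1def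
  set t2 : ℝ := Real.sqrt (3 * σf / ((n : ℝ) * δ)) with ht2def
  set t3 : ℝ := Real.sqrt (3 * σY / ((n : ℝ) * δ)) with ht3def
  have hδ3 : (0 : ℝ) < δ / 3 := by linarith
  have he1 : 3 * σf / (((m : ℝ) + n) * δ) = (σf / ((m : ℝ) + n)) / (δ / 3) := by
    field_simp
  have he2 : 3 * σf / ((n : ℝ) * δ) = (σf / (n : ℝ)) / (δ / 3) := by
    field_simp
  have he3 : 3 * σY / ((n : ℝ) * δ) = (σY / (n : ℝ)) / (δ / 3) := by
    field_simp
  have hB1 : μ {ω | t1 < ‖T1 ω‖} ≤ ENNReal.ofReal (δ / 3) := by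
    rw [ht1def, he1]
    exact DR.markov hT1mem hT1v hδ3
  have hB2 : μ {ω | t2 < ‖T3 ω‖} ≤ ENNReal.ofReal (δ / 3) := by
    rw [ht2def, he2]
    exact DR.markov hT3mem hT3v hδ3
  have hB3 : μ {ω | t3 < ‖T2 ω‖} ≤ ENNReal.ofReal (δ / 3) := by
    rw [ht3def, he3]
    exact DR.markov hT2mem hT2v hδ3
  -- decomposition of the doubly robust gradient
  have hdec : ∀ ω,
      ((m + n : ℝ))⁻¹ • (∑ i : Fin (m + n), Gf i ω)
        + ((n : ℝ))⁻¹ • ∑ i ∈ s, (GY i ω - Gf i ω)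
      = T1 ω + T2 ω - T3 ω := by
    intro ω
    have hA : ∑ i : Fin (m + n), Z i ω
        = (∑ i : Fin (m + n), Gf i ω) - ((m : ℝ) + n) • μf := by
      rw [hZdef]
      rw [Finset.sum_sub_distrib, Finset.sum_const, Finset.card_univ, Fintype.card_fin]
      congr 1
      rw [← Nat.cast_smul_eq_nsmul ℝ]
      push_cast
      ring_nf
    have hC : ∑ i ∈ s, Z i ω = (∑ i ∈ s, Gf i ω) - (n : ℝ) • μf := by
      rw [hZdef]
      rw [Finset.sum_sub_distrib, Finset.sum_const, hcard]
      congr 1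
      rw [← Nat.cast_smul_eq_nsmul ℝ]
    have hsplit : ∑ i ∈ s, (GY i ω - Gf i ω) = (∑ i ∈ s, GY i ω) - ∑ i ∈ s, Gf i ω :=
      Finset.sum_sub_distrib _ _
    rw [hT1def, hT2def, hT3def]
    simp only
    rw [hA, hC, hsplit]
    have e1 : ((m : ℝ) + n) ≠ 0 := by positivity
    have e2 : (n : ℝ) ≠ 0 := by positivity
    have key1 : ((m + n : ℝ))⁻¹ • (((m : ℝ) + n) • μf) = μf := by
      rw [smul_smul, inv_mul_cancel₀ e1, one_smul]
    have key2 : ((n : ℝ))⁻¹ • ((n : ℝ) • μf) = μf := by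
      rw [smul_smul, inv_mul_cancel₀ e2, one_smul]
    rw [smul_sub ((m + n : ℝ))⁻¹, smul_sub ((n : ℝ))⁻¹ (∑ i ∈ s, GY i ω),
      smul_sub ((n : ℝ))⁻¹ (∑ i ∈ s, Gf i ω), key1, key2]
    abel
  -- union bound
  refine DR.union_bound (B1 := {ω | t1 < ‖T1 ω‖}) (B2 := {ω | t2 < ‖T3 ω‖})
    (B3 := {ω | t3 < ‖T2 ω‖}) ?_ hδ0.le hδ1.le hB1 hB2 hB3
  rintro ω ⟨⟨h1, h2⟩, h3⟩
  simp only [Set.mem_compl_iff, Set.mem_setOf_eq, not_lt] at h1 h2 h3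
  show ‖((m + n : ℝ))⁻¹ • (∑ i : Fin (m + n), Gf i ω)
      + ((n : ℝ))⁻¹ • ∑ i ∈ s, (GY i ω - Gf i ω)‖ ≤ t1 + t2 + t3
  rw [hdec ω]
  calc ‖T1 ω + T2 ω - T3 ω‖ ≤ ‖T1 ω + T2 ω‖ + ‖T3 ω‖ := norm_sub_le _ _
    _ ≤ ‖T1 ω‖ + ‖T2 ω‖ + ‖T3 ω‖ := by
        gcongr
        exact norm_add_le _ _
    _ ≤ t1 + t3 + t2 := by gcongr
    _ = t1 + t2 + t3 := by ring
end

section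
/- Double robustness under correct importance weighting: if the labeled terms are weighted by w(X_i) where w is a version of the Radon–Nikodym derivative dP/dQ of the unlabeled covariate distribution P with respect to the labeled covariate distribution Q, then E[(1/m)Σ_{i=1}^{m} ℓ(X_i, f̂(X_i)) − (1/n)Σ_{i=m+1}^{m+n} w(X_i)·ℓ(X_i, f̂(X_i)) + (1/n)Σ_{i=m+1}^{m+n} w(X_i)·ℓ(X_i, Y_i)] = ∫_𝒳 ∫_𝒴 ℓ(x, y) dκ(x)(y) dP(x), the population risk under the target distribution P ⊗ κ, regardless of the accuracy of f̂. -/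
open MeasureTheory ProbabilityTheory Finset
open scoped ProbabilityTheory NNReal ENNReal

lemma integral_withDensity_ofReal {𝒳 : Type*} [MeasurableSpace 𝒳] (Q : Measure 𝒳)
    (w : 𝒳 → ℝ) (hw_meas : Measurable w) (hw_nonneg : ∀ x, 0 ≤ w x) (g : 𝒳 → ℝ) :
    ∫ x, g x ∂(Q.withDensity (fun x => ENNReal.ofReal (w x))) = ∫ x, w x * g x ∂Q := by
  have h1 : (fun x => ENNReal.ofReal (w x)) = fun x => ((w x).toNNReal : ℝ≥0∞) := rfl
  rw [h1, integral_withDensity_eq_integral_smul (by exact hw_meas.real_toNNReal) g]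
  refine integral_congr_ae (Filter.Eventually.of_forall fun x => ?_)
  simp [NNReal.smul_def, Real.coe_toNNReal _ (hw_nonneg x)]

/-- Double robustness under correct importance weighting: if the labeled terms are weighted
by a version `w` of the Radon–Nikodym derivative `dP/dQ`, then the expected weighted doubly
robust loss equals the population risk under the target distribution `P ⊗ κ`, regardless of
the accuracy of `f̂`. -/
theorem doubly_robust_loss_mismatch_correct_weight
    {Ω : Type*} [MeasurableSpace Ω] (μ : Measure Ω) [IsProbabilityMeasure μ]
    {𝒳 𝒴 : Type*} [MeasurableSpace 𝒳] [MeasurableSpace 𝒴]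
    (P Q : Measure 𝒳) [IsProbabilityMeasure P] [IsProbabilityMeasure Q]
    (hPQ : P ≪ Q)
    (w : 𝒳 → ℝ) (hw_meas : Measurable w) (hw_nonneg : ∀ x, 0 ≤ w x)
    (hw : P = Q.withDensity (fun x => ENNReal.ofReal (w x)))
    (κ : Kernel 𝒳 𝒴) [IsMarkovKernel κ]
    (m n : ℕ) (hm : 0 < m) (hn : 0 < n)
    (X : Fin m → Ω → 𝒳) (XY : Fin n → Ω → 𝒳 × 𝒴)
    (hXmeas : ∀ i, Measurable (X i)) (hXYmeas : ∀ j, Measurable (XY j))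
    (hXlaw : ∀ i, Measure.map (X i) μ = P)
    (hXYlaw : ∀ j, Measure.map (XY j) μ = Q ⊗ₘ κ)
    (f : 𝒳 → 𝒴) (hf : Measurable f)
    (ℓ : 𝒳 × 𝒴 → ℝ) (hℓ : Measurable ℓ)
    (hint_P : Integrable (fun x => ℓ (x, f x)) P)
    (hint_wf : Integrable (fun p : 𝒳 × 𝒴 => w p.1 * ℓ (p.1, f p.1)) (Q ⊗ₘ κ))
    (hint_wY : Integrable (fun p : 𝒳 × 𝒴 => w p.1 * ℓ p) (Q ⊗ₘ κ)) :
    ∫ ω, ((1 / (m : ℝ)) * ∑ i : Fin m, ℓ (X i ω, f (X i ω))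
        - (1 / (n : ℝ)) * ∑ j : Fin n, w (XY j ω).1 * ℓ ((XY j ω).1, f (XY j ω).1)
        + (1 / (n : ℝ)) * ∑ j : Fin n, w (XY j ω).1 * ℓ (XY j ω)) ∂μ
      = ∫ x, ∫ y, ℓ (x, y) ∂(κ x) ∂P := by
  -- measurability of integrands
  have hg1 : Measurable (fun x => ℓ (x, f x)) := hℓ.comp (measurable_id.prodMk hf)
  have hg2 : Measurable (fun p : 𝒳 × 𝒴 => w p.1 * ℓ (p.1, f p.1)) :=
    (hw_meas.comp measurable_fst).mul (hg1.comp measurable_fst)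
  have hg3 : Measurable (fun p : 𝒳 × 𝒴 => w p.1 * ℓ p) :=
    (hw_meas.comp measurable_fst).mul hℓ
  -- integrability over μ
  have hI1 : ∀ i, Integrable (fun ω => ℓ (X i ω, f (X i ω))) μ := fun i => by
    have := hint_P
    rw [← hXlaw i] at this
    exact (integrable_map_measure hg1.aestronglyMeasurable (hXmeas i).aemeasurable).mp this
  have hI2 : ∀ j, Integrable (fun ω => w (XY j ω).1 * ℓ ((XY j ω).1, f (XY j ω).1)) μ :=
    fun j => by
    have := hint_wf
    rw [← hXYlaw j] at this
    exact (integrable_map_measure hg2.aestronglyMeasurable (hXYmeas j).aemeasurable).mp this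
  have hI3 : ∀ j, Integrable (fun ω => w (XY j ω).1 * ℓ (XY j ω)) μ := fun j => by
    have := hint_wY
    rw [← hXYlaw j] at this
    exact (integrable_map_measure hg3.aestronglyMeasurable (hXYmeas j).aemeasurable).mp this
  -- identify individual expectations
  have hE1 : ∀ i, ∫ ω, ℓ (X i ω, f (X i ω)) ∂μ = ∫ x, ℓ (x, f x) ∂P := fun i => by
    rw [← hXlaw i, integral_map (hXmeas i).aemeasurable hg1.aestronglyMeasurable]
  have hE2 : ∀ j, ∫ ω, w (XY j ω).1 * ℓ ((XY j ω).1, f (XY j ω).1) ∂μ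
      = ∫ p : 𝒳 × 𝒴, w p.1 * ℓ (p.1, f p.1) ∂(Q ⊗ₘ κ) := fun j => by
    rw [← hXYlaw j, integral_map (hXYmeas j).aemeasurable hg2.aestronglyMeasurable]
  have hE3 : ∀ j, ∫ ω, w (XY j ω).1 * ℓ (XY j ω) ∂μ
      = ∫ p : 𝒳 × 𝒴, w p.1 * ℓ p ∂(Q ⊗ₘ κ) := fun j => by
    rw [← hXYlaw j, integral_map (hXYmeas j).aemeasurable hg3.aestronglyMeasurable]
  -- compute the compProd integrals
  have hA : ∫ p : 𝒳 × 𝒴, w p.1 * ℓ (p.1, f p.1) ∂(Q ⊗ₘ κ) = ∫ x, ℓ (x, f x) ∂P := by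
    rw [Measure.integral_compProd hint_wf]
    simp only [integral_const, measure_univ, ENNReal.toReal_one, probReal_univ, smul_eq_mul, one_mul]
    rw [hw, integral_withDensity_ofReal Q w hw_meas hw_nonneg]
  have hB : ∫ p : 𝒳 × 𝒴, w p.1 * ℓ p ∂(Q ⊗ₘ κ) = ∫ x, ∫ y, ℓ (x, y) ∂(κ x) ∂P := by
    rw [Measure.integral_compProd hint_wY, hw,
      integral_withDensity_ofReal Q w hw_meas hw_nonneg]
    refine integral_congr_ae (Filter.Eventually.of_forall fun x => ?_)
    simp [integral_const_mul]
  -- put everything together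
  have hS1 : Integrable (fun ω => (1 / (m : ℝ)) *
      ∑ i : Fin m, ℓ (X i ω, f (X i ω))) μ :=
    (integrable_finset_sum _ fun i _ => hI1 i).const_mul _
  have hS2 : Integrable (fun ω => (1 / (n : ℝ)) *
      ∑ j : Fin n, w (XY j ω).1 * ℓ ((XY j ω).1, f (XY j ω).1)) μ :=
    (integrable_finset_sum _ fun j _ => hI2 j).const_mul _
  have hS3 : Integrable (fun ω => (1 / (n : ℝ)) *
      ∑ j : Fin n, w (XY j ω).1 * ℓ (XY j ω)) μ :=
    (integrable_finset_sum _ fun j _ => hI3 j).const_mul _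
  have hsub : Integrable (fun ω => (1 / (m : ℝ)) * ∑ i : Fin m, ℓ (X i ω, f (X i ω))
      - (1 / (n : ℝ)) * ∑ j : Fin n, w (XY j ω).1 * ℓ ((XY j ω).1, f (XY j ω).1)) μ :=
    hS1.sub hS2
  rw [integral_add hsub hS3, integral_sub hS1 hS2,
    integral_const_mul, integral_const_mul, integral_const_mul,
    integral_finset_sum _ (fun i _ => hI1 i), integral_finset_sum _ (fun j _ => hI2 j),
    integral_finset_sum _ (fun j _ => hI3 j)]
  simp only [hE1, hE2, hE3, Finset.sum_const, Finset.card_univ, Fintype.card_fin, nsmul_eq_mul]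
  rw [hA, hB]
  have hm' : (m : ℝ) ≠ 0 := Nat.cast_ne_zero.mpr hm.ne'
  have hn' : (n : ℝ) ≠ 0 := Nat.cast_ne_zero.mpr hn.ne'
  field_simp
  ring
end

section
/- Double robustness under an accurate predictor: if for P-almost every and Q-almost every x one has ℓ(x, f̂(x)) = ∫_𝒴 ℓ(x, y) dκ(x)(y), then for any measurable positive weight function π, E[(1/m)Σ_{i=1}^{m} ℓ(X_i, f̂(X_i)) − (1/n)Σ_{i=m+1}^{m+n} (1/π(X_i))·ℓ(X_i, f̂(X_i)) + (1/n)Σ_{i=m+1}^{m+n} (1/π(X_i))·ℓ(X_i, Y_i)] = ∫_𝒳 ∫_𝒴 ℓ(x, y) dκ(x)(y) dP(x), the population risk under the target distribution P ⊗ κ, regardless of whether π is the correct importance weight. -/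
open MeasureTheory ProbabilityTheory Finset
open scoped ProbabilityTheory

/-- Double robustness under an accurate predictor: if for `P`-almost every and `Q`-almost
every `x` one has `ℓ(x, f̂(x)) = ∫ ℓ(x, y) dκ(x)(y)`, then for any measurable positive
weight `π` the expected weighted doubly robust loss equals the population risk under the
target distribution `P ⊗ κ`, regardless of whether `π` is the correct importance weight. -/
theorem doubly_robust_loss_mismatch_accurate_predictor
    {Ω : Type*} [MeasurableSpace Ω] (μ : Measure Ω) [IsProbabilityMeasure μ]
    {𝒳 𝒴 : Type*} [MeasurableSpace 𝒳] [MeasurableSpace 𝒴]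
    (P Q : Measure 𝒳) [IsProbabilityMeasure P] [IsProbabilityMeasure Q]
    (κ : Kernel 𝒳 𝒴) [IsMarkovKernel κ]
    (m n : ℕ) (hm : 0 < m) (hn : 0 < n)
    (X : Fin m → Ω → 𝒳) (XY : Fin n → Ω → 𝒳 × 𝒴)
    (hXmeas : ∀ i, Measurable (X i)) (hXYmeas : ∀ j, Measurable (XY j))
    (hXlaw : ∀ i, Measure.map (X i) μ = P)
    (hXYlaw : ∀ j, Measure.map (XY j) μ = Q ⊗ₘ κ)
    (f : 𝒳 → 𝒴) (hf : Measurable f)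
    (ℓ : 𝒳 × 𝒴 → ℝ) (hℓ : Measurable ℓ)
    (π : 𝒳 → ℝ) (hπ_meas : Measurable π) (hπ_pos : ∀ x, 0 < π x)
    (haccurate_P : ∀ᵐ x ∂P, ℓ (x, f x) = ∫ y, ℓ (x, y) ∂(κ x))
    (haccurate_Q : ∀ᵐ x ∂Q, ℓ (x, f x) = ∫ y, ℓ (x, y) ∂(κ x))
    (hint_P : Integrable (fun x => ℓ (x, f x)) P)
    (hint_πf : Integrable (fun p : 𝒳 × 𝒴 => (π p.1)⁻¹ * ℓ (p.1, f p.1)) (Q ⊗ₘ κ))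
    (hint_πY : Integrable (fun p : 𝒳 × 𝒴 => (π p.1)⁻¹ * ℓ p) (Q ⊗ₘ κ)) :
    ∫ ω, ((1 / (m : ℝ)) * ∑ i : Fin m, ℓ (X i ω, f (X i ω))
        - (1 / (n : ℝ)) * ∑ j : Fin n, (π (XY j ω).1)⁻¹ * ℓ ((XY j ω).1, f (XY j ω).1)
        + (1 / (n : ℝ)) * ∑ j : Fin n, (π (XY j ω).1)⁻¹ * ℓ (XY j ω)) ∂μ
      = ∫ x, ∫ y, ℓ (x, y) ∂(κ x) ∂P := by
  have mg1 : Measurable fun x : 𝒳 => ℓ (x, f x) := hℓ.comp (measurable_id.prodMk hf)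
  have mg2 : Measurable fun p : 𝒳 × 𝒴 => (π p.1)⁻¹ * ℓ (p.1, f p.1) :=
    ((hπ_meas.comp measurable_fst).inv).mul (mg1.comp measurable_fst)
  have mg3 : Measurable fun p : 𝒳 × 𝒴 => (π p.1)⁻¹ * ℓ p :=
    ((hπ_meas.comp measurable_fst).inv).mul hℓ
  have h1 : ∀ i : Fin m, Integrable (fun ω => ℓ (X i ω, f (X i ω))) μ := fun i => by
    have := hint_P
    rw [← hXlaw i,
      integrable_map_measure mg1.aestronglyMeasurable (hXmeas i).aemeasurable] at this
    exact this
  have h2 : ∀ j : Fin n,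
      Integrable (fun ω => (π (XY j ω).1)⁻¹ * ℓ ((XY j ω).1, f (XY j ω).1)) μ := fun j => by
    have := hint_πf
    rw [← hXYlaw j,
      integrable_map_measure mg2.aestronglyMeasurable (hXYmeas j).aemeasurable] at this
    exact this
  have h3 : ∀ j : Fin n, Integrable (fun ω => (π (XY j ω).1)⁻¹ * ℓ (XY j ω)) μ := fun j => by
    have := hint_πY
    rw [← hXYlaw j,
      integrable_map_measure mg3.aestronglyMeasurable (hXYmeas j).aemeasurable] at this
    exact this
  set R : ℝ := ∫ x, ∫ y, ℓ (x, y) ∂(κ x) ∂P with hR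
  have e1 : ∀ i : Fin m, ∫ ω, ℓ (X i ω, f (X i ω)) ∂μ = R := fun i => by
    rw [← integral_map (hXmeas i).aemeasurable mg1.aestronglyMeasurable, hXlaw i] at *
    exact integral_congr_ae haccurate_P
  set A : ℝ := ∫ p, (π p.1)⁻¹ * ℓ (p.1, f p.1) ∂(Q ⊗ₘ κ) with hA
  have key : (∫ p, (π p.1)⁻¹ * ℓ p ∂(Q ⊗ₘ κ)) = A := by
    rw [hA, Measure.integral_compProd hint_πf, Measure.integral_compProd hint_πY]
    refine integral_congr_ae ?_
    filter_upwards [haccurate_Q] with x hx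
    simp [integral_const_mul, hx]
  have e2 : ∀ j : Fin n, ∫ ω, (π (XY j ω).1)⁻¹ * ℓ ((XY j ω).1, f (XY j ω).1) ∂μ = A :=
    fun j => by
      rw [hA, ← hXYlaw j, integral_map (hXYmeas j).aemeasurable mg2.aestronglyMeasurable]
  have e3 : ∀ j : Fin n, ∫ ω, (π (XY j ω).1)⁻¹ * ℓ (XY j ω) ∂μ = A := fun j => by
    rw [← key, ← hXYlaw j, integral_map (hXYmeas j).aemeasurable mg3.aestronglyMeasurable]
  have I1 := (integrable_finset_sum univ fun i _ => h1 i).const_mul (1 / (m:ℝ))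
  have I2 := (integrable_finset_sum univ fun j _ => h2 j).const_mul (1 / (n:ℝ))
  have I3 := (integrable_finset_sum univ fun j _ => h3 j).const_mul (1 / (n:ℝ))
  have I12 : Integrable (fun ω => (1 / (m:ℝ)) * ∑ i : Fin m, ℓ (X i ω, f (X i ω))
      - (1 / (n:ℝ)) * ∑ j : Fin n, (π (XY j ω).1)⁻¹ * ℓ ((XY j ω).1, f (XY j ω).1)) μ :=
    I1.sub I2
  rw [integral_add I12 I3, integral_sub I1 I2, integral_const_mul, integral_const_mul,
    integral_const_mul, integral_finset_sum _ (fun i _ => h1 i),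
    integral_finset_sum _ (fun j _ => h2 j), integral_finset_sum _ (fun j _ => h3 j),
    Finset.sum_congr rfl (fun i _ => e1 i), Finset.sum_congr rfl (fun j _ => e2 j),
    Finset.sum_congr rfl (fun j _ => e3 j)]
  simp only [Finset.sum_const, Finset.card_univ, Fintype.card_fin, nsmul_eq_mul]
  have hm' : (m:ℝ) ≠ 0 := Nat.cast_ne_zero.mpr hm.ne'
  have hn' : (n:ℝ) ≠ 0 := Nat.cast_ne_zero.mpr hn.ne'
  field_simp
  ring
end
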